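/- Concatenation of a Shannon code with an ID-code for the ideal channel: if a channel N^{⊗n} admits a transmission code with M codewords and maximal error probability ≤ μ (i.e., states ρ_m and a POVM (E_m)_{m=1}^M with tr(N^{⊗n}(ρ_m)E_m) ≥ 1−μ), and there exists an ID-code for the ideal M-ary channel with N messages and errors λ₁, λ₂ (i.e., probability distributions P_i on {1,…,M} and sets A_i ⊆ {1,…,M} with P_i(A_i) ≥ 1−λ₁ and P_j(A_i) ≤ λ₂ for j ≠ i), then N^{⊗n} admits a (simultaneous) identification code with N messages and errors of first and second kind at most λ₁ + μ and λ₂ + μ respectively, given by ρ'_i = ∑_m P_i(m)ρ_m and D_i = ∑_{m∈A_i} E_m. -/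

import Mathlib

open Matrix
open scoped Kronecker ComplexOrder
noncomputable section

/-- The Choi matrix of a linear map between matrix algebras. -/
def choi {a b : ℕ} (Φ : Matrix (Fin a) (Fin a) ℂ →ₗ[ℂ] Matrix (Fin b) (Fin b) ℂ) :
    Matrix (Fin a × Fin b) (Fin a × Fin b) ℂ :=
  ∑ i, ∑ j, (Matrix.single i j (1 : ℂ)) ⊗ₖ Φ (Matrix.single i j 1)

/-- A linear map between matrix algebras is cptp iff its Choi matrix is positive
semidefinite (complete positivity) and it preserves the trace. -/
def IsCPTP {a b : ℕ} (Φ : Matrix (Fin a) (Fin a) ℂ →ₗ[ℂ] Matrix (Fin b) (Fin b) ℂ) : Prop :=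
  (choi Φ).PosSemidef ∧ ∀ ρ, (Φ ρ).trace = ρ.trace

/-- A density operator: positive semidefinite with unit trace. -/
def IsState {d : ℕ} (ρ : Matrix (Fin d) (Fin d) ℂ) : Prop := ρ.PosSemidef ∧ ρ.trace = 1

/-- The trace norm `‖X‖₁ = tr √(XᴴX)`. -/
def traceNorm {d : ℕ} (X : Matrix (Fin d) (Fin d) ℂ) : ℝ :=
  (((Matrix.posSemidef_conjTranspose_mul_self X).1.eigenvectorUnitary.1 *
      Matrix.diagonal (((↑) : ℝ → ℂ) ∘ (√·) ∘ (Matrix.posSemidef_conjTranspose_mul_self X).1.eigenvalues) *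
      (star (Matrix.posSemidef_conjTranspose_mul_self X).1.eigenvectorUnitary :
        Matrix (Fin d) (Fin d) ℂ)).trace).re

/-!
Measuring the POVM `E` on the channel outputs `T(ρₘ)` turns the quantum code into a classical
stochastic matrix `W m m' = tr(T(ρₘ) E_{m'})` with `W m m ≥ 1 - μ`. Hence the probability
`W(Aᵢ | m)` of decoding into `Aᵢ` differs from the indicator of `m ∈ Aᵢ` by at most `μ`, and
averaging over `Pⱼ` shows that `tr(T(ρ'ⱼ) Dᵢ)` differs from `Pⱼ(Aᵢ)` by at most `μ`.
-/

theorem Matrix.PosSemidef.trace_mul_nonneg {n 𝕜 : Type*} [Fintype n] [RCLike 𝕜]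
    {A B : Matrix n n 𝕜} (hA : A.PosSemidef) (hB : B.PosSemidef) : 0 ≤ (A * B).trace := by
  -- `tr(AB)` is the sum of all entries of the Schur product `A ⊙ Bᵀ`.
  have h := (hA.hadamard hB.transpose).dotProduct_mulVec_nonneg (fun _ => 1)
  simpa [trace, mul_apply, dotProduct, mulVec] using h

section Channel

variable {a b : ℕ} (T : Matrix (Fin a) (Fin a) ℂ →ₗ[ℂ] Matrix (Fin b) (Fin b) ℂ)

theorem trace_map_mul_eq_trace_choi_mul_kronecker
    (ρ : Matrix (Fin a) (Fin a) ℂ) (X : Matrix (Fin b) (Fin b) ℂ) :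
    (T ρ * X).trace = (choi T * (ρᵀ ⊗ₖ X)).trace := by
  conv_lhs => rw [matrix_eq_sum_single ρ]
  simp only [choi, Finset.sum_mul, trace_sum, map_sum, ← mul_kronecker_mul, trace_kronecker,
    trace_single_mul, one_smul, transpose_apply]
  refine Finset.sum_congr rfl fun i _ => Finset.sum_congr rfl fun j _ => ?_
  have hsingle : single i j (ρ i j) = ρ i j • single i j 1 := by
    rw [smul_single, smul_eq_mul, mul_one]
  rw [hsingle, map_smul, smul_mul_assoc, trace_smul, smul_eq_mul]

variable {T}

theorem re_trace_map_mul_nonneg_of_posSemidef_choi (hT : (choi T).PosSemidef)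
    {σ : Matrix (Fin a) (Fin a) ℂ} {X : Matrix (Fin b) (Fin b) ℂ}
    (hσ : σ.PosSemidef) (hX : X.PosSemidef) : 0 ≤ (T σ * X).trace.re := by
  rw [trace_map_mul_eq_trace_choi_mul_kronecker]
  exact (Complex.nonneg_iff.mp (hT.trace_mul_nonneg (hσ.transpose.kronecker hX))).1

theorem sum_re_trace_map_mul_eq_one (hT : ∀ ρ, (T ρ).trace = ρ.trace)
    {ρ : Matrix (Fin a) (Fin a) ℂ} (hρ : ρ.trace = 1) {ι : Type*} [Fintype ι]
    {E : ι → Matrix (Fin b) (Fin b) ℂ} (hE : ∑ m, E m = 1) :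
    ∑ m, (T ρ * E m).trace.re = 1 := by
  rw [← Complex.re_sum, ← trace_sum, ← Finset.mul_sum, hE, mul_one, hT, hρ, Complex.one_re]

theorem re_trace_map_sum_smul_mul {ι : Type*} [Fintype ι] (p : ι → ℝ)
    (ρ : ι → Matrix (Fin a) (Fin a) ℂ) (X : Matrix (Fin b) (Fin b) ℂ) :
    (T (∑ m, (p m : ℂ) • ρ m) * X).trace.re = ∑ m, p m * (T (ρ m) * X).trace.re := by
  simp only [map_sum, map_smul, Finset.sum_mul, smul_mul_assoc, trace_sum, trace_smul,
    Complex.re_sum, smul_eq_mul, Complex.re_ofReal_mul]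

end Channel

section Stochastic

variable {ι : Type*} [Fintype ι]

theorem abs_sum_mul_sub_sum_mul_le {p f g : ι → ℝ} {μ : ℝ} (hp0 : ∀ m, 0 ≤ p m)
    (hp1 : ∑ m, p m = 1) (hfg : ∀ m, |f m - g m| ≤ μ) :
    |∑ m, p m * f m - ∑ m, p m * g m| ≤ μ :=
  calc |∑ m, p m * f m - ∑ m, p m * g m| = |∑ m, p m * (f m - g m)| := by
        simp only [mul_sub, Finset.sum_sub_distrib]
    _ ≤ ∑ m, |p m * (f m - g m)| := Finset.abs_sum_le_sum_abs _ _
    _ ≤ ∑ m, p m * μ := Finset.sum_le_sum fun m _ => by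
        rw [abs_mul, abs_of_nonneg (hp0 m)]
        exact mul_le_mul_of_nonneg_left (hfg m) (hp0 m)
    _ = μ := by rw [← Finset.sum_mul, hp1, one_mul]

theorem abs_sum_sub_ite_mem_le [DecidableEq ι] {w : ι → ℝ} {μ : ℝ} {m : ι}
    (hw0 : ∀ m', 0 ≤ w m') (hw1 : ∑ m', w m' = 1) (hm : 1 - μ ≤ w m) (A : Finset ι) :
    |∑ m' ∈ A, w m' - if m ∈ A then 1 else 0| ≤ μ := by
  have hA : ∑ m' ∈ A, w m' + ∑ m' ∈ Aᶜ, w m' = 1 := by rw [Finset.sum_add_sum_compl, hw1]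
  have hAc : 0 ≤ ∑ m' ∈ Aᶜ, w m' := Finset.sum_nonneg fun m' _ => hw0 m'
  have hA0 : 0 ≤ ∑ m' ∈ A, w m' := Finset.sum_nonneg fun m' _ => hw0 m'
  split_ifs with hmA
  · have := Finset.single_le_sum (fun m' _ => hw0 m') hmA
    rw [abs_le]; constructor <;> linarith
  · have := Finset.single_le_sum (fun m' _ => hw0 m') (Finset.mem_compl.mpr hmA)
    rw [abs_le]; constructor <;> linarith

end Stochastic

/-- Concatenating a transmission code (with maximal error `μ`) with an ID-code for the
ideal `M`-ary channel (errors `λ₁, λ₂`) yields an identification code with errors at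
most `λ₁ + μ` and `λ₂ + μ`, via `ρ'ᵢ = ∑ₘ Pᵢ(m)ρₘ` and `Dᵢ = ∑_{m∈Aᵢ} Eₘ`. -/
theorem concatenation_transmission_and_ideal_id
    {a b : ℕ} (T : Matrix (Fin a) (Fin a) ℂ →ₗ[ℂ] Matrix (Fin b) (Fin b) ℂ)
    (hT : IsCPTP T) {M : ℕ}
    (ρ : Fin M → Matrix (Fin a) (Fin a) ℂ) (hρ : ∀ m, IsState (ρ m))
    (E : Fin M → Matrix (Fin b) (Fin b) ℂ)
    (hEpos : ∀ m, (E m).PosSemidef) (hEsum : ∑ m, E m = (1 : Matrix (Fin b) (Fin b) ℂ))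
    (μ : ℝ) (htrans : ∀ m, 1 - μ ≤ ((T (ρ m) * E m).trace).re)
    {N : ℕ} (P : Fin N → Fin M → ℝ)
    (hP0 : ∀ i m, 0 ≤ P i m) (hP1 : ∀ i, ∑ m, P i m = 1)
    (A : Fin N → Finset (Fin M))
    (lam₁ lam₂ : ℝ)
    (hid1 : ∀ i, 1 - lam₁ ≤ ∑ m ∈ A i, P i m)
    (hid2 : ∀ i j, j ≠ i → ∑ m ∈ A i, P j m ≤ lam₂) :
    ∀ i, ((∑ m ∈ A i, E m).PosSemidef ∧
          ((1 : Matrix (Fin b) (Fin b) ℂ) - ∑ m ∈ A i, E m).PosSemidef) ∧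
      1 - (lam₁ + μ) ≤
        ((T (∑ m, ((P i m : ℝ) : ℂ) • ρ m) * ∑ m ∈ A i, E m).trace).re ∧
      ∀ j, j ≠ i →
        ((T (∑ m, ((P j m : ℝ) : ℂ) • ρ m) * ∑ m ∈ A i, E m).trace).re ≤ lam₂ + μ := by
  intro i
  set W : Fin M → Fin M → ℝ := fun m m' => (T (ρ m) * E m').trace.re
  have hW0 : ∀ m m', 0 ≤ W m m' := fun m m' =>
    re_trace_map_mul_nonneg_of_posSemidef_choi hT.1 (hρ m).1 (hEpos m')
  have hW1 : ∀ m, ∑ m', W m m' = 1 := fun m =>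
    sum_re_trace_map_mul_eq_one hT.2 (hρ m).2 hEsum
  have hdecode : ∀ j, |((T (∑ m, ((P j m : ℝ) : ℂ) • ρ m) * ∑ m ∈ A i, E m).trace).re
      - ∑ m ∈ A i, P j m| ≤ μ := by
    intro j
    have hmix : ((T (∑ m, ((P j m : ℝ) : ℂ) • ρ m) * ∑ m ∈ A i, E m).trace).re
        = ∑ m, P j m * ∑ m' ∈ A i, W m m' := by
      rw [re_trace_map_sum_smul_mul]
      refine Finset.sum_congr rfl fun m _ => ?_
      rw [Finset.mul_sum, trace_sum, Complex.re_sum]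
    have hideal : ∑ m ∈ A i, P j m = ∑ m, P j m * if m ∈ A i then 1 else 0 := by
      simp only [mul_ite, mul_one, mul_zero, Finset.sum_ite_mem, Finset.univ_inter]
    rw [hmix, hideal]
    exact abs_sum_mul_sub_sum_mul_le (hP0 j) (hP1 j)
      fun m => abs_sum_sub_ite_mem_le (hW0 m) (hW1 m) (htrans m) (A i)
  have hcompl : (1 : Matrix (Fin b) (Fin b) ℂ) - ∑ m ∈ A i, E m = ∑ m ∈ (A i)ᶜ, E m := by
    rw [← hEsum, ← Finset.sum_add_sum_compl (A i) E, add_sub_cancel_left]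
  refine ⟨⟨posSemidef_sum _ fun m _ => hEpos m, ?_⟩, ?_, fun j hj => ?_⟩
  · rw [hcompl]
    exact posSemidef_sum _ fun m _ => hEpos m
  · linarith [(abs_le.mp (hdecode i)).1, hid1 i]
  · linarith [(abs_le.mp (hdecode j)).2, hid2 i j hj]
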